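/- In the one-step preventive ordering setting, the difference of the two total expected costs satisfies, for every time horizon r, c_{O@tk+1}(r) − c_{O@tk}(r) = P(RUL ≤ l)·Δt·(c_unav + c_inv − ECTR) − c_inv·Δt + (c_unav + c_inv − ECTR)·( P(l < RUL ≤ l + Δt)·(l + Δt) − E[RUL·1_{l < RUL ≤ l + Δt}] ); in particular this difference is independent of r. -/

import Mathlib

/-!
Multiplying each conditional expectation by the probability of its event turns it into a set
integral of `RUL` (also for a null event, where both sides vanish). Both total costs then become
linear in the probabilities and set integrals of the three events `RUL ≤ l`,
`l < RUL ≤ l + Δt` and `l + Δt < RUL`; the horizon enters only through `ECTR · r` times the total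
probability, which is the same for both policies, and additivity over this partition does the rest.
-/

open MeasureTheory Set

section ThresholdSplit

variable {Ω : Type*} {X : Ω → ℝ} {u v : ℝ}

theorem setOf_le_eq_union_setOf_Ioc (huv : u ≤ v) :
    {ω | X ω ≤ v} = {ω | X ω ≤ u} ∪ {ω | u < X ω ∧ X ω ≤ v} :=
  (congrArg (X ⁻¹' ·) (Iic_union_Ioc_eq_Iic huv)).symm

theorem setOf_lt_eq_union_setOf_Ioc (huv : u ≤ v) :
    {ω | u < X ω} = {ω | u < X ω ∧ X ω ≤ v} ∪ {ω | v < X ω} :=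
  (congrArg (X ⁻¹' ·) (Ioc_union_Ioi_eq_Ioi huv)).symm

theorem disjoint_setOf_le_setOf_Ioc :
    Disjoint {ω | X ω ≤ u} {ω | u < X ω ∧ X ω ≤ v} :=
  (Iic_disjoint_Ioc le_rfl).preimage X

theorem disjoint_setOf_Ioc_setOf_lt :
    Disjoint {ω | u < X ω ∧ X ω ≤ v} {ω | v < X ω} :=
  Ioc_disjoint_Ioi_same.preimage X

variable [MeasurableSpace Ω] {μ : Measure Ω}

theorem measureReal_setOf_le_eq_add [IsFiniteMeasure μ] (hX : Measurable X) (huv : u ≤ v) :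
    μ.real {ω | X ω ≤ v} = μ.real {ω | X ω ≤ u} + μ.real {ω | u < X ω ∧ X ω ≤ v} := by
  rw [setOf_le_eq_union_setOf_Ioc huv]
  exact measureReal_union disjoint_setOf_le_setOf_Ioc (measurableSet_Ioc.preimage hX)

theorem measureReal_setOf_lt_eq_add [IsFiniteMeasure μ] (hX : Measurable X) (huv : u ≤ v) :
    μ.real {ω | u < X ω} = μ.real {ω | u < X ω ∧ X ω ≤ v} + μ.real {ω | v < X ω} := by
  rw [setOf_lt_eq_union_setOf_Ioc huv]
  exact measureReal_union disjoint_setOf_Ioc_setOf_lt (measurableSet_Ioi.preimage hX)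

theorem setIntegral_setOf_le_eq_add {f : Ω → ℝ} (hX : Measurable X) (huv : u ≤ v)
    (hf : Integrable f μ) :
    ∫ ω in {ω | X ω ≤ v}, f ω ∂μ =
      (∫ ω in {ω | X ω ≤ u}, f ω ∂μ) + ∫ ω in {ω | u < X ω ∧ X ω ≤ v}, f ω ∂μ := by
  rw [setOf_le_eq_union_setOf_Ioc huv]
  exact setIntegral_union disjoint_setOf_le_setOf_Ioc (measurableSet_Ioc.preimage hX)
    hf.integrableOn hf.integrableOn

theorem setIntegral_setOf_lt_eq_add {f : Ω → ℝ} (hX : Measurable X) (huv : u ≤ v)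
    (hf : Integrable f μ) :
    ∫ ω in {ω | u < X ω}, f ω ∂μ =
      (∫ ω in {ω | u < X ω ∧ X ω ≤ v}, f ω ∂μ) + ∫ ω in {ω | v < X ω}, f ω ∂μ := by
  rw [setOf_lt_eq_union_setOf_Ioc huv]
  exact setIntegral_union disjoint_setOf_Ioc_setOf_lt (measurableSet_Ioi.preimage hX)
    hf.integrableOn hf.integrableOn

theorem probReal_setOf_le_add_probReal_setOf_lt [IsProbabilityMeasure μ] (hX : Measurable X)
    (u : ℝ) : μ.real {ω | X ω ≤ u} + μ.real {ω | u < X ω} = 1 := by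
  rw [← probReal_univ (μ := μ), ← measureReal_add_measureReal_compl (measurableSet_Iic.preimage hX)]
  congr 2
  ext ω
  simp

end ThresholdSplit

theorem measureReal_mul_setIntegral_div {α : Type*} [MeasurableSpace α] {μ : Measure α}
    {s : Set α} (f : α → ℝ) (hs : μ s ≠ ⊤) :
    μ.real s * ((∫ x in s, f x ∂μ) / μ.real s) = ∫ x in s, f x ∂μ :=
  mul_div_cancel_of_imp' fun h => setIntegral_measure_zero f ((measureReal_eq_zero_iff hs).1 h)

theorem doa_ordering_cost_difference_general
    {Ω : Type*} [MeasurableSpace Ω] (P : Measure Ω) [IsProbabilityMeasure P]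
    (RUL : Ω → ℝ) (hRUL_meas : Measurable RUL)
    (hRUL_int : Integrable RUL P)
    (Δt l c_inv c_unav ECTR : ℝ) (hΔt : 0 < Δt)
    (p_le_l : ℝ) (hp_le_l : p_le_l = (P {ω | RUL ω ≤ l}).toReal)
    (p_gt_l : ℝ) (hp_gt_l : p_gt_l = (P {ω | l < RUL ω}).toReal)
    (p_le_lΔ : ℝ) (hp_le_lΔ : p_le_lΔ = (P {ω | RUL ω ≤ l + Δt}).toReal)
    (p_gt_lΔ : ℝ) (hp_gt_lΔ : p_gt_lΔ = (P {ω | l + Δt < RUL ω}).toReal)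
    (p_mid : ℝ) (hp_mid : p_mid = (P {ω | l < RUL ω ∧ RUL ω ≤ l + Δt}).toReal)
    (E_le_l : ℝ) (hE_le_l : E_le_l = (∫ ω in {ω | RUL ω ≤ l}, RUL ω ∂P) / p_le_l)
    (E_gt_l : ℝ) (hE_gt_l : E_gt_l = (∫ ω in {ω | l < RUL ω}, RUL ω ∂P) / p_gt_l)
    (E_le_lΔ : ℝ)
    (hE_le_lΔ : E_le_lΔ = (∫ ω in {ω | RUL ω ≤ l + Δt}, RUL ω ∂P) / p_le_lΔ)
    (E_gt_lΔ : ℝ)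
    (hE_gt_lΔ : E_gt_lΔ = (∫ ω in {ω | l + Δt < RUL ω}, RUL ω ∂P) / p_gt_lΔ) :
    ∀ r : ℝ,
      (p_le_lΔ * ((l + Δt - E_le_lΔ) * c_unav + ECTR * (r - l - Δt)) +
            p_gt_lΔ * ((E_gt_lΔ - l - Δt) * c_inv + ECTR * (r - E_gt_lΔ))) -
          (p_le_l * ((l - E_le_l) * c_unav + ECTR * (r - l)) +
            p_gt_l * ((E_gt_l - l) * c_inv + ECTR * (r - E_gt_l))) =
        p_le_l * Δt * (c_unav + c_inv - ECTR) - c_inv * Δt +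
          (c_unav + c_inv - ECTR) *
            (p_mid * (l + Δt) -
              ∫ ω in {ω | l < RUL ω ∧ RUL ω ≤ l + Δt}, RUL ω ∂P) := by
  intro r
  have hlΔ : l ≤ l + Δt := by linarith
  have hp_le_split : p_le_lΔ = p_le_l + p_mid := by
    rw [hp_le_lΔ, hp_le_l, hp_mid]; exact measureReal_setOf_le_eq_add (μ := P) hRUL_meas hlΔ
  have hp_gt_split : p_gt_l = p_mid + p_gt_lΔ := by
    rw [hp_gt_l, hp_gt_lΔ, hp_mid]; exact measureReal_setOf_lt_eq_add (μ := P) hRUL_meas hlΔ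
  have hp_total : p_le_l + p_gt_l = 1 := by
    rw [hp_le_l, hp_gt_l]; exact probReal_setOf_le_add_probReal_setOf_lt (μ := P) hRUL_meas l
  have hI_le_split := setIntegral_setOf_le_eq_add hRUL_meas hlΔ hRUL_int
  have hI_gt_split := setIntegral_setOf_lt_eq_add hRUL_meas hlΔ hRUL_int
  have hpE_le_l : p_le_l * E_le_l = ∫ ω in {ω | RUL ω ≤ l}, RUL ω ∂P := by
    rw [hE_le_l, hp_le_l]; exact measureReal_mul_setIntegral_div RUL (measure_ne_top P _)
  have hpE_gt_l : p_gt_l * E_gt_l = ∫ ω in {ω | l < RUL ω}, RUL ω ∂P := by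
    rw [hE_gt_l, hp_gt_l]; exact measureReal_mul_setIntegral_div RUL (measure_ne_top P _)
  have hpE_le_lΔ : p_le_lΔ * E_le_lΔ = ∫ ω in {ω | RUL ω ≤ l + Δt}, RUL ω ∂P := by
    rw [hE_le_lΔ, hp_le_lΔ]; exact measureReal_mul_setIntegral_div RUL (measure_ne_top P _)
  have hpE_gt_lΔ : p_gt_lΔ * E_gt_lΔ = ∫ ω in {ω | l + Δt < RUL ω}, RUL ω ∂P := by
    rw [hE_gt_lΔ, hp_gt_lΔ]; exact measureReal_mul_setIntegral_div RUL (measure_ne_top P _)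
  linear_combination c_unav * hpE_le_l + (ECTR - c_inv) * hpE_gt_l - c_unav * hpE_le_lΔ
    + (c_inv - ECTR) * hpE_gt_lΔ + ((l + Δt) * c_unav + ECTR * (r - l - Δt)) * hp_le_split
    + (l * c_inv - ECTR * r + c_inv * Δt) * hp_gt_split - c_inv * Δt * hp_total
    - c_unav * hI_le_split + (ECTR - c_inv) * hI_gt_split

/-- One-step preventive ordering: the difference of the two total expected costs is
independent of the time horizon `r` and equals
`P(RUL ≤ l)·Δt·(c_unav + c_inv − ECTR) − c_inv·Δt
  + (c_unav + c_inv − ECTR)·(P(l < RUL ≤ l+Δt)·(l+Δt) − E[RUL·1_{l < RUL ≤ l+Δt}])`. -/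
theorem doa_ordering_cost_difference
    {Ω : Type*} [MeasurableSpace Ω] (P : Measure Ω) [IsProbabilityMeasure P]
    (RUL : Ω → ℝ) (hRUL_meas : Measurable RUL) (hRUL_nonneg : ∀ ω, 0 ≤ RUL ω)
    (hRUL_int : Integrable RUL P)
    (Δt l c_inv c_unav ECTR : ℝ) (hΔt : 0 < Δt) (hl : 0 < l)
    (p_le_l : ℝ) (hp_le_l : p_le_l = (P {ω | RUL ω ≤ l}).toReal)
    (p_gt_l : ℝ) (hp_gt_l : p_gt_l = (P {ω | l < RUL ω}).toReal)
    (p_le_lΔ : ℝ) (hp_le_lΔ : p_le_lΔ = (P {ω | RUL ω ≤ l + Δt}).toReal)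
    (p_gt_lΔ : ℝ) (hp_gt_lΔ : p_gt_lΔ = (P {ω | l + Δt < RUL ω}).toReal)
    (p_mid : ℝ) (hp_mid : p_mid = (P {ω | l < RUL ω ∧ RUL ω ≤ l + Δt}).toReal)
    (hp_le_l_pos : 0 < p_le_l) (hp_le_lΔ_lt_one : p_le_lΔ < 1) (hp_mid_pos : 0 < p_mid)
    (E_le_l : ℝ) (hE_le_l : E_le_l = (∫ ω in {ω | RUL ω ≤ l}, RUL ω ∂P) / p_le_l)
    (E_gt_l : ℝ) (hE_gt_l : E_gt_l = (∫ ω in {ω | l < RUL ω}, RUL ω ∂P) / p_gt_l)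
    (E_le_lΔ : ℝ)
    (hE_le_lΔ : E_le_lΔ = (∫ ω in {ω | RUL ω ≤ l + Δt}, RUL ω ∂P) / p_le_lΔ)
    (E_gt_lΔ : ℝ)
    (hE_gt_lΔ : E_gt_lΔ = (∫ ω in {ω | l + Δt < RUL ω}, RUL ω ∂P) / p_gt_lΔ) :
    ∀ r : ℝ,
      (p_le_lΔ * ((l + Δt - E_le_lΔ) * c_unav + ECTR * (r - l - Δt)) +
            p_gt_lΔ * ((E_gt_lΔ - l - Δt) * c_inv + ECTR * (r - E_gt_lΔ))) -
          (p_le_l * ((l - E_le_l) * c_unav + ECTR * (r - l)) +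
            p_gt_l * ((E_gt_l - l) * c_inv + ECTR * (r - E_gt_l))) =
        p_le_l * Δt * (c_unav + c_inv - ECTR) - c_inv * Δt +
          (c_unav + c_inv - ECTR) *
            (p_mid * (l + Δt) -
              ∫ ω in {ω | l < RUL ω ∧ RUL ω ≤ l + Δt}, RUL ω ∂P) :=
  doa_ordering_cost_difference_general P RUL hRUL_meas hRUL_int Δt l c_inv c_unav ECTR hΔt p_le_l
    hp_le_l p_gt_l hp_gt_l p_le_lΔ hp_le_lΔ p_gt_lΔ hp_gt_lΔ p_mid hp_mid E_le_l hE_le_l E_gt_l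
    hE_gt_l E_le_lΔ hE_le_lΔ E_gt_lΔ hE_gt_lΔ
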